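/- arXiv:1303.4834 — 6 statements merged into one kernel-verified Lean document; each statement's English description precedes it below -/
import Mathlib

section
/- Let S be a 2×2 real matrix with det S = 1 and |trace S| < 2, let I − S be invertible, let η ∈ ℝ², and let (Y_n) be a sequence in ℝ² satisfying Y_{n+1} = S·Y_n + η for all n ∈ ℕ. Then the set {Y_n : n ∈ ℕ} is bounded. -/
/-!
By Cayley–Hamilton, `S² = (tr S) S - 1`, so the orbit satisfies the scalar-coefficient recurrence
`Y (n + 2) = t Y (n + 1) - Y n + c` with `t = tr S`. Since `t ≠ 2` it can be shifted by a constant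
to the homogeneous recurrence `v (n + 2) = t v (n + 1) - v n`, which conserves the quadratic form
`‖a‖² - t ⟪a, b⟫ + ‖b‖²` in consecutive terms `(a, b) = (v (n + 1), v n)`. For `|t| < 2` this form
dominates `(1 - |t| / 2) (‖a‖² + ‖b‖²)`, so the orbit is bounded.
-/

open Matrix Bornology

/-- The positive semi-orbit of `x` under the continuous dynamical system `y' = A y`,
i.e. the set `{exp (t A) x : t ≥ 0}`. -/
noncomputable def contOrbit (A : Matrix (Fin 2) (Fin 2) ℝ) (x : EuclideanSpace ℝ (Fin 2)) :
    Set (EuclideanSpace ℝ (Fin 2)) :=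
  {y | ∃ t : ℝ, 0 ≤ t ∧ y = (NormedSpace.exp (t • A)).mulVec x}

/-- The positive semi-orbit of `x` under the discrete dynamical system `y_{n+1} = S y_n`,
i.e. the set `{Sⁿ x : n ∈ ℕ}`. -/
def discOrbit (S : Matrix (Fin 2) (Fin 2) ℝ) (x : EuclideanSpace ℝ (Fin 2)) :
    Set (EuclideanSpace ℝ (Fin 2)) :=
  {y | ∃ n : ℕ, y = (S ^ n).mulVec x}

open RealInnerProductSpace Set

theorem Matrix.sq_eq_trace_smul_sub_det_smul_one {R : Type*} [CommRing R]
    (A : Matrix (Fin 2) (Fin 2) R) : A ^ 2 = A.trace • A - A.det • 1 := by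
  ext i j
  fin_cases i <;> fin_cases j <;>
    simp [sq, Matrix.mul_apply, Matrix.trace_fin_two, Matrix.det_fin_two] <;> ring

theorem Module.End.add_two_eq_of_sq_eq {R M : Type*} [CommRing R] [AddCommGroup M] [Module R M]
    {L : Module.End R M} {t : R} (hL : L ^ 2 = t • L - 1) {η : M} {Y : ℕ → M}
    (hY : ∀ n, Y (n + 1) = L (Y n) + η) (n : ℕ) :
    Y (n + 2) = t • Y (n + 1) - Y n + (L η + (1 - t) • η) := by
  have hLY : L (L (Y n)) = t • L (Y n) - Y n := by
    simpa [sq] using congr($hL (Y n))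
  rw [hY, hY, map_add, hLY]
  module

section Energy

variable {E : Type*} [NormedAddCommGroup E] [InnerProductSpace ℝ E]

def recurrenceEnergy (t : ℝ) (a b : E) : ℝ := ‖a‖ ^ 2 - t * ⟪a, b⟫ + ‖b‖ ^ 2

theorem recurrenceEnergy_smul_sub (t : ℝ) (a b : E) :
    recurrenceEnergy t (t • a - b) a = recurrenceEnergy t a b := by
  simp only [recurrenceEnergy, ← real_inner_self_eq_norm_sq, inner_sub_left, inner_sub_right,
    inner_smul_left, inner_smul_right, real_inner_comm a b, RCLike.conj_to_real]
  ring

theorem mul_add_sq_le_recurrenceEnergy (t : ℝ) (a b : E) :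
    (1 - |t| / 2) * (‖a‖ ^ 2 + ‖b‖ ^ 2) ≤ recurrenceEnergy t a b := by
  have hinner : |t * ⟪a, b⟫| ≤ |t| * (‖a‖ * ‖b‖) := by
    rw [abs_mul]
    gcongr
    exact abs_real_inner_le_norm a b
  have hamgm : 2 * ‖a‖ * ‖b‖ ≤ ‖a‖ ^ 2 + ‖b‖ ^ 2 := two_mul_le_add_sq _ _
  unfold recurrenceEnergy
  nlinarith [le_abs_self (t * ⟪a, b⟫), abs_nonneg t]

variable {t : ℝ} {v : ℕ → E}

theorem recurrenceEnergy_eq_of_add_two (hv : ∀ n, v (n + 2) = t • v (n + 1) - v n) (n : ℕ) :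
    recurrenceEnergy t (v (n + 1)) (v n) = recurrenceEnergy t (v 1) (v 0) := by
  induction n with
  | zero => rfl
  | succ n ih => rw [hv, recurrenceEnergy_smul_sub, ih]

theorem isBounded_range_of_add_two (ht : |t| < 2) (hv : ∀ n, v (n + 2) = t • v (n + 1) - v n) :
    IsBounded (range v) := by
  have hpos : 0 < 1 - |t| / 2 := by linarith
  refine isBounded_iff_forall_norm_le.2
    ⟨√(recurrenceEnergy t (v 1) (v 0) / (1 - |t| / 2)), ?_⟩
  rintro _ ⟨n, rfl⟩
  refine Real.le_sqrt_of_sq_le ((le_div_iff₀ hpos).2 ?_)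
  calc ‖v n‖ ^ 2 * (1 - |t| / 2) ≤ (1 - |t| / 2) * (‖v (n + 1)‖ ^ 2 + ‖v n‖ ^ 2) := by
        nlinarith [sq_nonneg ‖v (n + 1)‖]
    _ ≤ recurrenceEnergy t (v (n + 1)) (v n) := mul_add_sq_le_recurrenceEnergy t _ _
    _ = recurrenceEnergy t (v 1) (v 0) := recurrenceEnergy_eq_of_add_two hv n

theorem isBounded_range_of_add_two_eq_add_const (ht : |t| < 2) {c : E}
    (hv : ∀ n, v (n + 2) = t • v (n + 1) - v n + c) : IsBounded (range v) := by
  set q := (2 - t)⁻¹ • c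
  have hq : (2 - t) • q = c := smul_inv_smul₀ (by linarith [le_abs_self t]) c
  have hw : IsBounded (range fun n => v n - q) :=
    isBounded_range_of_add_two ht fun n => by rw [hv, ← hq]; module
  simpa [← range_comp, Function.comp_def] using
    (IsometryEquiv.addRight q).isometry.lipschitz.isBounded_image hw

end Energy

theorem stmt_10_general (S : Matrix (Fin 2) (Fin 2) ℝ) (hDet : S.det = 1) (hTr : |S.trace| < 2)
    (η : EuclideanSpace ℝ (Fin 2)) (Y : ℕ → EuclideanSpace ℝ (Fin 2))
    (hY : ∀ n : ℕ, Y (n + 1) = (show EuclideanSpace ℝ (Fin 2) from WithLp.toLp 2 (S.mulVec (Y n))) + η) :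
    IsBounded (Set.range Y) := by
  have hL : toLpLin 2 2 S ^ 2 = S.trace • toLpLin 2 2 S - 1 := by
    rw [← toLpLin_pow, S.sq_eq_trace_smul_sub_det_smul_one, hDet, one_smul, map_sub, map_smul,
      toLpLin_one, Module.End.one_eq_id]
  exact isBounded_range_of_add_two_eq_add_const hTr (Module.End.add_two_eq_of_sq_eq hL hY)

theorem stmt_10 (S : Matrix (Fin 2) (Fin 2) ℝ) (hDet : S.det = 1) (hTr : |S.trace| < 2)
    (hS : IsUnit (1 - S)) (η : EuclideanSpace ℝ (Fin 2)) (Y : ℕ → EuclideanSpace ℝ (Fin 2))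
    (hY : ∀ n : ℕ, Y (n + 1) = (show EuclideanSpace ℝ (Fin 2) from WithLp.toLp 2 (S.mulVec (Y n))) + η) :
    IsBounded (Set.range Y) :=
  stmt_10_general S hDet hTr η Y hY
end

section
/- Let a, b ∈ ℝ with ab > 0, and let 0 < τ < 2/√(ab). Let S(τ) be the 2×2 real matrix with rows (1, −τb) and (τa, 1 − τ²ab). Then for every x ∈ ℝ², the set {S(τ)ⁿ·x : n ∈ ℕ} is bounded. -/
/-!
Symplectic Euler B preserves exactly the quadratic form `a p² + b q² - τ a b p q`. Its
discriminant `(τ a b)² - 4 a b = a b (τ² a b - 4)` is negative when `τ < 2 / √(a b)`, so the form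
is definite, its level sets are ellipses, and every orbit stays on one of them.
-/

open Matrix Bornology

lemma exists_pos_mul_sq_add_sq_le {a b c : ℝ} (ha : 0 < a) (hdisc : c ^ 2 < 4 * a * b) :
    ∃ ε > 0, ∀ p q : ℝ, ε * (p ^ 2 + q ^ 2) ≤ a * p ^ 2 + b * q ^ 2 - c * (p * q) := by
  have hb : 0 < b := by nlinarith [sq_nonneg c]
  refine ⟨(4 * a * b - c ^ 2) / (4 * (a + b)), by apply div_pos <;> linarith, fun p q => ?_⟩
  rw [div_mul_eq_mul_div, div_le_iff₀ (by linarith)]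
  -- with `Q` the form: `4aQ = (2ap - cq)² + (4ab - c²) q²` and `4bQ = (2bq - cp)² + (4ab - c²) p²`
  nlinarith [sq_nonneg (2 * a * p - c * q), sq_nonneg (2 * b * q - c * p)]

lemma exists_pos_mul_sq_add_sq_le_abs {a b c : ℝ} (hdisc : c ^ 2 < 4 * a * b) :
    ∃ ε > 0, ∀ p q : ℝ, ε * (p ^ 2 + q ^ 2) ≤ |a * p ^ 2 + b * q ^ 2 - c * (p * q)| := by
  have ha : a ≠ 0 := by rintro rfl; nlinarith [sq_nonneg c]
  rcases ha.lt_or_gt with ha | ha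
  · obtain ⟨ε, hε, h⟩ := exists_pos_mul_sq_add_sq_le (a := -a) (b := -b) (c := -c) (by linarith)
      (by linarith)
    refine ⟨ε, hε, fun p q => (h p q).trans ?_⟩
    rw [← abs_neg]
    exact (le_of_eq (by ring)).trans (le_abs_self _)
  · obtain ⟨ε, hε, h⟩ := exists_pos_mul_sq_add_sq_le ha hdisc
    exact ⟨ε, hε, fun p q => (h p q).trans (le_abs_self _)⟩

lemma mulVec_pow_invariant {ι R α : Type*} [Fintype ι] [DecidableEq ι] [CommSemiring R]
    {S : Matrix ι ι R} {g : (ι → R) → α} (hg : ∀ v, g (S *ᵥ v) = g v) (n : ℕ) (v : ι → R) :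
    g ((S ^ n) *ᵥ v) = g v := by
  induction n with
  | zero => simp
  | succ n ih => rw [pow_succ', ← mulVec_mulVec, hg, ih]

lemma isBounded_of_forall_mul_norm_sq_le {E : Type*} [SeminormedAddCommGroup E] {s : Set E}
    {ε C : ℝ} (hε : 0 < ε) (h : ∀ y ∈ s, ε * ‖y‖ ^ 2 ≤ C) : IsBounded s := by
  rw [isBounded_iff_forall_norm_le]
  refine ⟨√(C / ε), fun y hy => Real.le_sqrt_of_sq_le ?_⟩
  rw [le_div_iff₀ hε]
  linarith [h y hy]

lemma EuclideanSpace.norm_sq_eq_fin_two (y : EuclideanSpace ℝ (Fin 2)) :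
    ‖y‖ ^ 2 = y 0 ^ 2 + y 1 ^ 2 := by
  simp [EuclideanSpace.norm_sq_eq, Fin.sum_univ_two]

lemma sq_mul_lt_four_of_lt_two_div_sqrt {τ d : ℝ} (hd : 0 < d) (hτ0 : 0 < τ)
    (hτ : τ < 2 / √d) : τ ^ 2 * d < 4 := by
  have hsqrt : 0 < √d := Real.sqrt_pos.2 hd
  have h : τ * √d < 2 := (lt_div_iff₀ hsqrt).1 hτ
  calc τ ^ 2 * d = (τ * √d) ^ 2 := by rw [mul_pow, Real.sq_sqrt hd.le]
    _ < 2 ^ 2 := by gcongr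
    _ = 4 := by norm_num

/-- Twice the modified Hamiltonian of symplectic Euler B, conserved exactly by the scheme. -/
def modifiedEnergy (a b τ : ℝ) (v : Fin 2 → ℝ) : ℝ :=
  a * v 0 ^ 2 + b * v 1 ^ 2 - τ * a * b * (v 0 * v 1)

lemma modifiedEnergy_mulVec (a b τ : ℝ) (v : Fin 2 → ℝ) :
    modifiedEnergy a b τ (!![1, -τ * b; τ * a, 1 - τ ^ 2 * a * b] *ᵥ v) =
      modifiedEnergy a b τ v := by
  simp only [modifiedEnergy, mulVec, dotProduct, Fin.sum_univ_two, of_apply, cons_val',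
    cons_val_zero, cons_val_one, empty_val', cons_val_fin_one]
  ring

theorem stmt_12 (a b τ : ℝ) (hab : 0 < a * b) (hτ0 : 0 < τ) (hτ : τ < 2 / Real.sqrt (a * b))
    (x : EuclideanSpace ℝ (Fin 2)) :
    IsBounded (discOrbit !![1, -τ * b; τ * a, 1 - τ ^ 2 * a * b] x) := by
  have hdisc : (τ * a * b) ^ 2 < 4 * a * b := by
    have := sq_mul_lt_four_of_lt_two_div_sqrt hab hτ0 hτ
    nlinarith
  obtain ⟨ε, hε, hcoercive⟩ := exists_pos_mul_sq_add_sq_le_abs hdisc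
  refine isBounded_of_forall_mul_norm_sq_le hε (C := |modifiedEnergy a b τ x|) ?_
  rintro y ⟨n, hy⟩
  rw [EuclideanSpace.norm_sq_eq_fin_two,
    ← mulVec_pow_invariant (modifiedEnergy_mulVec a b τ) n, ← hy]
  exact hcoercive (y 0) (y 1)
end

section
/- Let a, b ∈ ℝ with ab > 0, and let τ > 2/√(ab). Let S(τ) be the 2×2 real matrix with rows (1, −τb) and (τa, 1 − τ²ab). Then trace S(τ) < −2 and there exists x ∈ ℝ² such that the set {S(τ)ⁿ·x : n ∈ ℕ} is unbounded, even though every positive semi-orbit {exp(tA)·x : t ≥ 0} of the matrix A with rows (0, −b) and (a, 0) is bounded. -/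
/-!
The flow of `A = !![0, -b; a, 0]` preserves the quadratic form `a p² + b q²`: with
`P = diagonal ![a, b]` we have `Aᵀ P = -P A`, hence `exp (t A)ᵀ = P exp (-t A) P⁻¹` and
`exp (t A)ᵀ P exp (t A) = P`. For `ab > 0` the level sets of this form are ellipses, so every
continuous orbit is bounded.

The map `S(τ)` has determinant `1` and trace `2 - τ²ab < -2`, so its characteristic polynomial
`μ² - tr S · μ + 1` has a real root `μ < -1`; the discrete orbit of an eigenvector for `μ`
grows like `|μ|ⁿ`.
-/

open Matrix Bornology

open NormedSpace

namespace Matrix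

variable {m : Type*} [Fintype m] [DecidableEq m] {A P : Matrix m m ℝ}

theorem transpose_exp_mul_mul_exp (hP : IsUnit P.det) (hAP : Aᵀ * P = -(P * A)) :
    (exp A)ᵀ * P * exp A = P := by
  have hconj : Aᵀ = P * -A * P⁻¹ := by
    rw [mul_neg, ← hAP, Matrix.mul_assoc, mul_nonsing_inv _ hP, Matrix.mul_one]
  rw [← exp_transpose, hconj, exp_conj _ _ ((isUnit_iff_isUnit_det P).2 hP), exp_neg,
    Matrix.mul_assoc, Matrix.mul_assoc (P * _), nonsing_inv_mul_cancel_left _ _ hP,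
    Matrix.mul_assoc, nonsing_inv_mul _ ((isUnit_iff_isUnit_det _).1 (isUnit_exp A)),
    Matrix.mul_one]

theorem mulVec_exp_dotProduct_mulVec (hP : IsUnit P.det) (hAP : Aᵀ * P = -(P * A))
    (x : m → ℝ) : (exp A *ᵥ x) ⬝ᵥ (P *ᵥ (exp A *ᵥ x)) = x ⬝ᵥ (P *ᵥ x) := by
  conv_rhs => rw [← transpose_exp_mul_mul_exp hP hAP, ← mulVec_mulVec, ← mulVec_mulVec,
    dotProduct_mulVec, vecMul_transpose]

theorem mulVec_eigenvector_fin_two {R : Type*} [CommRing R] (M : Matrix (Fin 2) (Fin 2) R)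
    {μ : R} (hμ : μ ^ 2 - M.trace * μ + M.det = 0) :
    M *ᵥ ![M 0 1, μ - M 0 0] = μ • ![M 0 1, μ - M 0 0] := by
  rw [trace_fin_two, det_fin_two] at hμ
  ext i
  fin_cases i <;> simp only [Fin.zero_eta, Fin.mk_one, mulVec, dotProduct, Fin.sum_univ_two,
    cons_val_zero, cons_val_one, Pi.smul_apply, smul_eq_mul]
  · ring
  · linear_combination -hμ

end Matrix

theorem exists_lt_neg_one_sq_sub_mul_add_one_eq_zero {t : ℝ} (ht : t < -2) :
    ∃ μ < -1, μ ^ 2 - t * μ + 1 = 0 := by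
  have hd : √(t ^ 2 - 4) ^ 2 = t ^ 2 - 4 := Real.sq_sqrt (by nlinarith)
  refine ⟨(t - √(t ^ 2 - 4)) / 2, by linarith [Real.sqrt_nonneg (t ^ 2 - 4)], ?_⟩
  linear_combination hd / 4

theorem not_isBounded_discOrbit_of_mulVec_eq_smul {S : Matrix (Fin 2) (Fin 2) ℝ}
    {v : Fin 2 → ℝ} {μ : ℝ} (hv : S *ᵥ v = μ • v) (hμ : 1 < |μ|) (hv0 : v ≠ 0) :
    ¬ IsBounded (discOrbit S (WithLp.toLp 2 v)) := by
  have hpow : ∀ n : ℕ, (S ^ n) *ᵥ v = μ ^ n • v := by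
    intro n
    induction n with
    | zero => simp
    | succ n ih => rw [pow_succ', ← mulVec_mulVec, ih, mulVec_smul, hv, smul_smul, pow_succ]
  intro hbdd
  obtain ⟨C, hC⟩ := isBounded_iff_forall_norm_le.1 hbdd
  have hv_norm : 0 < ‖WithLp.toLp 2 v‖ := norm_pos_iff.2 (by simpa using hv0)
  obtain ⟨n, hn⟩ := pow_unbounded_of_one_lt (C / ‖WithLp.toLp 2 v‖) hμ
  have hle := hC (μ ^ n • WithLp.toLp 2 v) ⟨n, by simp [hpow]⟩
  rw [norm_smul, norm_pow, Real.norm_eq_abs] at hle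
  rw [div_lt_iff₀ hv_norm] at hn
  linarith

theorem isBounded_setOf_mul_sq_add_mul_sq_eq {a b : ℝ} (hab : 0 < a * b) (E : ℝ) :
    IsBounded {y : EuclideanSpace ℝ (Fin 2) | a * y 0 ^ 2 + b * y 1 ^ 2 = E} := by
  -- Multiplying by `a` makes both coefficients positive: `a * E = a² y₀² + ab y₁²`.
  set c := min (a ^ 2) (a * b)
  have hc : 0 < c := lt_min (pow_two_pos_of_ne_zero (left_ne_zero_of_mul hab.ne')) hab
  rw [isBounded_iff_forall_norm_le]
  refine ⟨√(a * E / c), fun y (hy : a * y 0 ^ 2 + b * y 1 ^ 2 = E) => ?_⟩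
  have hE : 0 ≤ a * E := by
    rw [← hy]
    nlinarith [sq_nonneg (a * y 0), sq_nonneg (y 1)]
  rw [Real.le_sqrt (norm_nonneg y) (div_nonneg hE hc.le), le_div_iff₀ hc,
    EuclideanSpace.real_norm_sq_eq, Fin.sum_univ_two, ← hy]
  nlinarith [min_le_left (a ^ 2) (a * b), min_le_right (a ^ 2) (a * b),
    sq_nonneg (y 0), sq_nonneg (y 1)]

theorem isBounded_contOrbit {a b : ℝ} (hab : 0 < a * b) (x : EuclideanSpace ℝ (Fin 2)) :
    IsBounded (contOrbit !![0, -b; a, 0] x) := by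
  set P : Matrix (Fin 2) (Fin 2) ℝ := diagonal ![a, b]
  have hP : IsUnit P.det := by
    simpa [P, det_diagonal, Fin.prod_univ_two] using hab.ne'
  have hAP (t : ℝ) : (t • !![0, -b; a, 0])ᵀ * P = -(P * (t • !![0, -b; a, 0])) := by
    ext i j
    fin_cases i <;> fin_cases j <;> simp [P, mul_comm, mul_left_comm]
  have hform (y : Fin 2 → ℝ) : y ⬝ᵥ (P *ᵥ y) = a * y 0 ^ 2 + b * y 1 ^ 2 := by
    simp only [P, dotProduct, mulVec_diagonal, Fin.sum_univ_two, cons_val_zero, cons_val_one]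
    ring
  refine (isBounded_setOf_mul_sq_add_mul_sq_eq hab (a * x 0 ^ 2 + b * x 1 ^ 2)).subset ?_
  rintro y ⟨t, -, hy⟩
  change a * y 0 ^ 2 + b * y 1 ^ 2 = _
  rw [← hform, ← hform, hy, mulVec_exp_dotProduct_mulVec hP (hAP t)]

theorem stmt_13 (a b τ : ℝ) (hab : 0 < a * b) (hτ : 2 / Real.sqrt (a * b) < τ) :
    (!![1, -τ * b; τ * a, 1 - τ ^ 2 * a * b] : Matrix (Fin 2) (Fin 2) ℝ).trace < -2 ∧
    (∃ x : EuclideanSpace ℝ (Fin 2),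
      ¬ IsBounded (discOrbit !![1, -τ * b; τ * a, 1 - τ ^ 2 * a * b] x)) ∧
    (∀ x : EuclideanSpace ℝ (Fin 2), IsBounded (contOrbit !![0, -b; a, 0] x)) := by
  set S : Matrix (Fin 2) (Fin 2) ℝ := !![1, -τ * b; τ * a, 1 - τ ^ 2 * a * b]
  have h4 : 4 < τ ^ 2 * (a * b) := by
    have h2 : 2 < τ * √(a * b) := (div_lt_iff₀ (Real.sqrt_pos.2 hab)).1 hτ
    nlinarith [Real.sq_sqrt hab.le]
  have htr : S.trace = 2 - τ ^ 2 * (a * b) := by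
    rw [trace_fin_two_of]
    ring
  have hdet : S.det = 1 := by
    rw [det_fin_two_of]
    ring
  obtain ⟨μ, hμ, hroot⟩ := exists_lt_neg_one_sq_sub_mul_add_one_eq_zero (t := S.trace)
    (by linarith)
  have hv0 : ![S 0 1, μ - S 0 0] ≠ 0 := fun h => by
    have h1 : μ - 1 = 0 := by simpa [S] using congrFun h 1
    linarith
  refine ⟨by linarith, ⟨_, not_isBounded_discOrbit_of_mulVec_eq_smul
    (S.mulVec_eigenvector_fin_two (by rwa [hdet])) ?_ hv0⟩, isBounded_contOrbit hab⟩
  rw [abs_of_neg (by linarith)]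
  linarith
end

section
/- Let a, b ∈ ℝ with ab < 0, let τ > 0, and let S(τ) be the 2×2 real matrix with rows (1, −τb) and (τa, 1 − τ²ab). Then the set {x ∈ ℝ² : {S(τ)ⁿ·x : n ∈ ℕ} is bounded} is a linear subspace of ℝ² of dimension 1; in particular its dimension equals the dimension of the subspace {x ∈ ℝ² : {exp(tA)·x : t ≥ 0} is bounded}, where A is the matrix with rows (0, −b) and (a, 0). -/
/-!
Both coefficient matrices have a left eigenvector `w` whose eigenvalue drives orbits to infinity:
`l > 1` for `S(τ)`, which has trace `2 - τ²ab > 2` and determinant `1`, and `μ = √(-ab) > 0` for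
`A`. In the plane the line `w⊥` is invariant, so it consists of eigenvectors for the other
eigenvalue, `1/l` resp. `-μ`. Hence an orbit starting on `w⊥` is `(1/l)ⁿ x` resp. `e^{-μt} x` and
stays bounded, while off `w⊥` the coordinate `w ⬝ᵥ x` is multiplied by `lⁿ` resp. `e^{μt}`.
So both sets of bounded orbits are the line `w⊥`.
-/

open Matrix Bornology

theorem ContinuousLinearMap.map_exp_eq_of_map_pow {𝔸 F : Type*} [NormedRing 𝔸] [NormedAlgebra ℝ 𝔸]
    [CompleteSpace 𝔸] [AddCommMonoid F] [Module ℝ F] [TopologicalSpace F] [ContinuousSMul ℝ F]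
    [T2Space F] (L : 𝔸 →L[ℝ] F) {a : 𝔸} {r : ℝ} {v : F}
    (h : ∀ k, L (a ^ k) = r ^ k • v) : L (NormedSpace.exp a) = Real.exp r • v := by
  refine ((NormedSpace.exp_series_hasSum_exp' (𝕂 := ℝ) a).mapL L).unique ?_
  rw [Real.exp_eq_exp_ℝ]
  simpa only [Function.comp_def, map_smul, h, smul_smul, smul_eq_mul] using
    (NormedSpace.exp_series_hasSum_exp' (𝕂 := ℝ) r).smul_const v

namespace Matrix

variable {n R : Type*} [Fintype n] [DecidableEq n]

theorem pow_mulVec_of_mulVec_eq_smul [CommSemiring R] {M : Matrix n n R} {x : n → R} {r : R}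
    (h : M *ᵥ x = r • x) (k : ℕ) : (M ^ k) *ᵥ x = r ^ k • x := by
  induction k with
  | zero => simp
  | succ k ih => rw [pow_succ', ← mulVec_mulVec, ih, mulVec_smul, h, smul_smul, pow_succ]

section

attribute [local instance] Matrix.linftyOpNormedRing Matrix.linftyOpNormedAlgebra

theorem exp_mulVec_of_mulVec_eq_smul {M : Matrix n n ℝ} {x : n → ℝ} {r : ℝ}
    (h : M *ᵥ x = r • x) : NormedSpace.exp M *ᵥ x = Real.exp r • x :=
  (AddMonoidHom.toRealLinearMap (mulVec.addMonoidHomLeft x)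
    (continuous_id.matrix_mulVec continuous_const)).map_exp_eq_of_map_pow (a := M)
    (pow_mulVec_of_mulVec_eq_smul h)

end

theorem vecMul_pow_of_vecMul_eq_smul [CommSemiring R] {M : Matrix n n R} {w : n → R} {r : R}
    (h : w ᵥ* M = r • w) (k : ℕ) : w ᵥ* (M ^ k) = r ^ k • w := by
  rw [← mulVec_transpose, transpose_pow]
  exact pow_mulVec_of_mulVec_eq_smul (by rwa [mulVec_transpose]) k

theorem vecMul_exp_of_vecMul_eq_smul {M : Matrix n n ℝ} {w : n → ℝ} {r : ℝ}
    (h : w ᵥ* M = r • w) : w ᵥ* NormedSpace.exp M = Real.exp r • w := by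
  rw [← mulVec_transpose, ← exp_transpose]
  exact exp_mulVec_of_mulVec_eq_smul (by rwa [mulVec_transpose])

-- `w⊥` is an `M`-invariant line, so `M` acts on it by the eigenvalue other than `r`.
theorem mulVec_eq_smul_of_vecMul_eq_smul {M : Matrix (Fin 2) (Fin 2) ℝ} {w x : Fin 2 → ℝ}
    {r : ℝ} (hw : w ≠ 0) (h : w ᵥ* M = r • w) (hx : w ⬝ᵥ x = 0) :
    M *ᵥ x = (M.trace - r) • x := by
  have h0 := congrFun h 0
  have h1 := congrFun h 1
  simp only [vecMul, dotProduct, Fin.sum_univ_two, Pi.smul_apply, smul_eq_mul] at h0 h1 hx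
  obtain ⟨i, hi⟩ : ∃ i, w i ≠ 0 := by
    by_contra! hw'
    exact hw (funext hw')
  ext j
  apply mul_left_cancel₀ hi
  fin_cases i <;> fin_cases j <;>
    simp only [Fin.zero_eta, Fin.mk_one, mulVec, dotProduct, Fin.sum_univ_two, trace_fin_two,
      Pi.smul_apply, smul_eq_mul]
  · linear_combination x 1 * h1 - (M 1 1 - r) * hx
  · linear_combination -x 1 * h0 + M 1 0 * hx
  · linear_combination -x 0 * h1 + M 0 1 * hx
  · linear_combination x 0 * h0 - (M 0 0 - r) * hx

end Matrix

section EuclideanSpace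

open WithLp

theorem mem_orthogonal_span_singleton_toLp_iff {ι : Type*} [Fintype ι] {w : ι → ℝ}
    {x : EuclideanSpace ℝ ι} : x ∈ (ℝ ∙ toLp 2 w)ᗮ ↔ w ⬝ᵥ ofLp x = 0 := by
  rw [Submodule.mem_orthogonal_singleton_iff_inner_right, EuclideanSpace.inner_eq_star_dotProduct,
    ofLp_toLp, star_trivial, dotProduct_comm]

theorem Bornology.IsBounded.exists_forall_abs_dotProduct_le {ι : Type*} [Fintype ι]
    {s : Set (EuclideanSpace ℝ ι)} (hs : IsBounded s) (w : ι → ℝ) :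
    ∃ C, ∀ y ∈ s, |w ⬝ᵥ ofLp y| ≤ C := by
  obtain ⟨R, hR⟩ := isBounded_iff_forall_norm_le.1 hs
  refine ⟨‖toLp 2 w‖ * R, fun y hy => ?_⟩
  calc |w ⬝ᵥ ofLp y| = |inner ℝ (toLp 2 w) y| := by
        rw [EuclideanSpace.inner_eq_star_dotProduct, ofLp_toLp, star_trivial, dotProduct_comm]
    _ ≤ ‖toLp 2 w‖ * ‖y‖ := abs_real_inner_le_norm _ _
    _ ≤ ‖toLp 2 w‖ * R := by gcongr; exact hR y hy

theorem finrank_orthogonal_span_singleton_toLp {w : Fin 2 → ℝ} (hw : w ≠ 0) :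
    Module.finrank ℝ (ℝ ∙ toLp 2 w)ᗮ = 1 :=
  have : Fact (Module.finrank ℝ (EuclideanSpace ℝ (Fin 2)) = 1 + 1) := ⟨finrank_euclideanSpace_fin⟩
  Submodule.finrank_orthogonal_span_singleton ((toLp_eq_zero 2).not.2 hw)

end EuclideanSpace

section Orbits

open WithLp Filter

variable {M : Matrix (Fin 2) (Fin 2) ℝ} {x : EuclideanSpace ℝ (Fin 2)} {w : Fin 2 → ℝ} {r : ℝ}

theorem isBounded_discOrbit_of_mulVec_eq_smul (h : M *ᵥ ofLp x = r • ofLp x) (hr : |r| ≤ 1) :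
    IsBounded (discOrbit M x) := by
  refine (Metric.isBounded_closedBall (x := 0) (r := ‖x‖)).subset ?_
  rintro y ⟨k, hy⟩
  obtain rfl : y = r ^ k • x :=
    ofLp_injective 2 (by rw [hy, Matrix.pow_mulVec_of_mulVec_eq_smul h, ofLp_smul])
  rw [mem_closedBall_zero_iff, norm_smul, norm_pow, Real.norm_eq_abs]
  exact mul_le_of_le_one_left (norm_nonneg x) (pow_le_one₀ (abs_nonneg r) hr)

theorem isBounded_contOrbit_of_mulVec_eq_smul (h : M *ᵥ ofLp x = r • ofLp x) (hr : r ≤ 0) :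
    IsBounded (contOrbit M x) := by
  refine (Metric.isBounded_closedBall (x := 0) (r := ‖x‖)).subset ?_
  rintro y ⟨t, ht, hy⟩
  have htM : (t • M) *ᵥ ofLp x = (t * r) • ofLp x := by rw [smul_mulVec, h, smul_smul]
  obtain rfl : y = Real.exp (t * r) • x :=
    ofLp_injective 2 (by rw [hy, Matrix.exp_mulVec_of_mulVec_eq_smul htM, ofLp_smul])
  rw [mem_closedBall_zero_iff, norm_smul, Real.norm_of_nonneg (Real.exp_nonneg _)]
  exact mul_le_of_le_one_left (norm_nonneg x)
    (Real.exp_le_one_iff.2 (mul_nonpos_of_nonneg_of_nonpos ht hr))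

theorem not_isBounded_discOrbit_of_vecMul_eq_smul (h : w ᵥ* M = r • w) (hr : 1 < |r|)
    (hx : w ⬝ᵥ ofLp x ≠ 0) : ¬IsBounded (discOrbit M x) := by
  intro hb
  obtain ⟨C, hC⟩ := hb.exists_forall_abs_dotProduct_le w
  obtain ⟨k, hk⟩ := pow_unbounded_of_one_lt (C / |w ⬝ᵥ ofLp x|) hr
  have hCk := hC (toLp 2 (M ^ k *ᵥ ofLp x)) ⟨k, rfl⟩
  rw [ofLp_toLp, dotProduct_mulVec, Matrix.vecMul_pow_of_vecMul_eq_smul h, smul_dotProduct,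
    smul_eq_mul, abs_mul, abs_pow] at hCk
  rw [div_lt_iff₀ (abs_pos.2 hx)] at hk
  linarith

theorem not_isBounded_contOrbit_of_vecMul_eq_smul (h : w ᵥ* M = r • w) (hr : 0 < r)
    (hx : w ⬝ᵥ ofLp x ≠ 0) : ¬IsBounded (contOrbit M x) := by
  intro hb
  obtain ⟨C, hC⟩ := hb.exists_forall_abs_dotProduct_le w
  have hexp : Tendsto (fun t => Real.exp (t * r)) atTop atTop :=
    Real.tendsto_exp_atTop.comp (tendsto_id.atTop_mul_const hr)
  obtain ⟨t, ht, htC⟩ :=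
    ((eventually_ge_atTop 0).and (hexp.eventually_gt_atTop (C / |w ⬝ᵥ ofLp x|))).exists
  have hCt := hC (toLp 2 (NormedSpace.exp (t • M) *ᵥ ofLp x)) ⟨t, ht, rfl⟩
  have htM : w ᵥ* (t • M) = (t * r) • w := by rw [vecMul_smul, h, smul_smul]
  rw [ofLp_toLp, dotProduct_mulVec, Matrix.vecMul_exp_of_vecMul_eq_smul htM, smul_dotProduct,
    smul_eq_mul, abs_mul, abs_of_pos (Real.exp_pos _)] at hCt
  rw [div_lt_iff₀ (abs_pos.2 hx)] at htC
  linarith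

theorem coe_orthogonal_eq_setOf_isBounded_discOrbit (hw : w ≠ 0) (h : w ᵥ* M = r • w)
    (hr : 1 < |r|) (hM : |M.trace - r| ≤ 1) :
    ((ℝ ∙ toLp 2 w)ᗮ : Set (EuclideanSpace ℝ (Fin 2))) = {x | IsBounded (discOrbit M x)} := by
  ext x
  rw [SetLike.mem_coe, mem_orthogonal_span_singleton_toLp_iff]
  refine ⟨fun hx => ?_, fun hb => ?_⟩
  · exact isBounded_discOrbit_of_mulVec_eq_smul (Matrix.mulVec_eq_smul_of_vecMul_eq_smul hw h hx) hM
  · by_contra hx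
    exact not_isBounded_discOrbit_of_vecMul_eq_smul h hr hx hb

theorem coe_orthogonal_eq_setOf_isBounded_contOrbit (hw : w ≠ 0) (h : w ᵥ* M = r • w)
    (hr : 0 < r) (hM : M.trace - r ≤ 0) :
    ((ℝ ∙ toLp 2 w)ᗮ : Set (EuclideanSpace ℝ (Fin 2))) = {x | IsBounded (contOrbit M x)} := by
  ext x
  rw [SetLike.mem_coe, mem_orthogonal_span_singleton_toLp_iff]
  refine ⟨fun hx => ?_, fun hb => ?_⟩
  · exact isBounded_contOrbit_of_mulVec_eq_smul (Matrix.mulVec_eq_smul_of_vecMul_eq_smul hw h hx) hM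
  · by_contra hx
    exact not_isBounded_contOrbit_of_vecMul_eq_smul h hr hx hb

end Orbits

theorem exists_one_lt_root_of_two_lt {T : ℝ} (hT : 2 < T) :
    ∃ l, 1 < l ∧ |T - l| ≤ 1 ∧ l ^ 2 - T * l + 1 = 0 := by
  have hD : 0 ≤ T ^ 2 - 4 := by nlinarith
  have hs := Real.sq_sqrt hD
  have hs0 := Real.sqrt_nonneg (T ^ 2 - 4)
  refine ⟨(T + √(T ^ 2 - 4)) / 2, by linarith, abs_le.2 ⟨by nlinarith, by nlinarith⟩, ?_⟩
  linear_combination hs / 4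

theorem symplecticEulerB_vecMul_eq_smul {a b τ l : ℝ}
    (hl : l ^ 2 - (2 - τ ^ 2 * a * b) * l + 1 = 0) :
    ![l - 1 + τ ^ 2 * a * b, -τ * b] ᵥ* !![1, -τ * b; τ * a, 1 - τ ^ 2 * a * b] =
      l • ![l - 1 + τ ^ 2 * a * b, -τ * b] := by
  ext i
  fin_cases i <;> simp [vecMul, dotProduct, Fin.sum_univ_two]
  · linear_combination -hl
  · ring

theorem hamiltonian_vecMul_eq_smul {a b μ : ℝ} (hμ : μ ^ 2 = -(a * b)) :
    ![μ, -b] ᵥ* !![0, -b; a, 0] = μ • ![μ, -b] := by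
  ext i
  fin_cases i <;> simp [vecMul, dotProduct, Fin.sum_univ_two]
  linear_combination -hμ

theorem stmt_14 (a b τ : ℝ) (hab : a * b < 0) (hτ : 0 < τ) :
    ∃ BS BA : Submodule ℝ (EuclideanSpace ℝ (Fin 2)),
      (↑BS = {x : EuclideanSpace ℝ (Fin 2) |
        IsBounded (discOrbit !![1, -τ * b; τ * a, 1 - τ ^ 2 * a * b] x)}) ∧
      Module.finrank ℝ BS = 1 ∧
      (↑BA = {x : EuclideanSpace ℝ (Fin 2) | IsBounded (contOrbit !![0, -b; a, 0] x)}) ∧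
      Module.finrank ℝ BA = Module.finrank ℝ BS := by
  have hb : b ≠ 0 := by rintro rfl; simp at hab
  obtain ⟨l, hl1, hlT, hl⟩ := exists_one_lt_root_of_two_lt (T := 2 - τ ^ 2 * a * b)
    (by nlinarith [mul_pos (pow_pos hτ 2) (neg_pos.2 hab)])
  set μ := √(-(a * b))
  have hμ : 0 < μ := Real.sqrt_pos.2 (by linarith)
  have hwS : ![l - 1 + τ ^ 2 * a * b, -τ * b] ≠ 0 := fun h => by
    simpa [hτ.ne', hb] using congrFun h 1
  have hwA : ![μ, -b] ≠ 0 := fun h => by simpa [hb] using congrFun h 1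
  refine ⟨(ℝ ∙ !₂[l - 1 + τ ^ 2 * a * b, -τ * b])ᗮ, (ℝ ∙ !₂[μ, -b])ᗮ,
    coe_orthogonal_eq_setOf_isBounded_discOrbit hwS (symplecticEulerB_vecMul_eq_smul hl)
      (by rwa [abs_of_pos (by linarith)]) ?_,
    finrank_orthogonal_span_singleton_toLp hwS,
    coe_orthogonal_eq_setOf_isBounded_contOrbit hwA
      (hamiltonian_vecMul_eq_smul (Real.sq_sqrt (by linarith))) hμ (by simpa [trace_fin_two] using hμ.le),
    by rw [finrank_orthogonal_span_singleton_toLp hwS, finrank_orthogonal_span_singleton_toLp hwA]⟩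
  rw [trace_fin_two]
  convert hlT using 2
  simp only [of_apply, cons_val', cons_val_zero, cons_val_one, empty_val', cons_val_fin_one]
  ring
end

section
/- Let c ∈ ℝ with c < 0 and let 0 < τ < 2/√(−c). Let S(τ) be the 2×2 real matrix with rows (1 + τ²c/2, τc(1 + τ²c/4)) and (τ, 1 + τ²c/2), obtained by applying the Störmer–Verlet scheme with step size τ to the linear system p' = c q, q' = p. Then det S(τ) = 1, |trace S(τ)| = |2 + τ²c| < 2, and for every x ∈ ℝ² the set {S(τ)ⁿ·x : n ∈ ℕ} is bounded. -/
/-!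
The Störmer–Verlet matrix `S = !![a, b; τ, a]` has determinant `a² - bτ = 1` and equal diagonal
entries, and every such matrix preserves the quadratic form `τ p² - b q²`. For `c < 0` and
`τ² (-c) < 4` we have `b = τ c (1 + τ² c / 4) < 0 < τ`, so this form is positive definite and
every orbit stays on one of its (bounded) level ellipses.
-/

open Matrix Bornology

noncomputable def stormerVerletMatrix (c τ : ℝ) : Matrix (Fin 2) (Fin 2) ℝ :=
  !![1 + τ ^ 2 * c / 2, τ * c * (1 + τ ^ 2 * c / 4); τ, 1 + τ ^ 2 * c / 2]

lemma det_stormerVerletMatrix (c τ : ℝ) : (stormerVerletMatrix c τ).det = 1 := by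
  rw [stormerVerletMatrix, det_fin_two_of]
  ring

lemma trace_stormerVerletMatrix (c τ : ℝ) : (stormerVerletMatrix c τ).trace = 2 + τ ^ 2 * c := by
  rw [stormerVerletMatrix, trace_fin_two_of]
  ring

lemma sq_mul_neg_lt_four {c τ : ℝ} (hc : c < 0) (hτ0 : 0 < τ) (hτ : τ < 2 / Real.sqrt (-c)) :
    τ ^ 2 * -c < 4 := by
  have hs : 0 < Real.sqrt (-c) := Real.sqrt_pos.mpr (neg_pos.mpr hc)
  have hτs : τ * Real.sqrt (-c) < 2 := (lt_div_iff₀ hs).mp hτ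
  calc τ ^ 2 * -c = (τ * Real.sqrt (-c)) ^ 2 := by
        rw [mul_pow, Real.sq_sqrt (neg_nonneg.mpr hc.le)]
    _ < 2 ^ 2 := by gcongr
    _ = 4 := by norm_num

lemma quadForm_mulVec_of_det_eq_one {a b d : ℝ} (hdet : !![a, b; d, a].det = 1) (v : Fin 2 → ℝ) :
    d * (!![a, b; d, a] *ᵥ v) 0 ^ 2 - b * (!![a, b; d, a] *ᵥ v) 1 ^ 2 =
      d * v 0 ^ 2 - b * v 1 ^ 2 := by
  simp only [mulVec, dotProduct, Fin.sum_univ_two, of_apply, cons_val', cons_val_fin_one,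
    cons_val_zero, cons_val_one]
  rw [det_fin_two_of] at hdet
  linear_combination (d * v 0 ^ 2 - b * v 1 ^ 2) * hdet

lemma norm_sq_le_inv_add_inv_mul {α β : ℝ} (hα : 0 < α) (hβ : 0 < β)
    (y : EuclideanSpace ℝ (Fin 2)) :
    ‖y‖ ^ 2 ≤ (α⁻¹ + β⁻¹) * (α * y 0 ^ 2 + β * y 1 ^ 2) := by
  have h : (α⁻¹ + β⁻¹) * (α * y 0 ^ 2 + β * y 1 ^ 2) =
      y 0 ^ 2 + y 1 ^ 2 + (β / α * y 1 ^ 2 + α / β * y 0 ^ 2) := by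
    field_simp
    ring
  rw [EuclideanSpace.norm_sq_eq, Fin.sum_univ_two, Real.norm_eq_abs, Real.norm_eq_abs, sq_abs,
    sq_abs, h]
  have : 0 ≤ β / α * y 1 ^ 2 + α / β * y 0 ^ 2 := by positivity
  linarith

lemma isBounded_discOrbit_of_invariant {S : Matrix (Fin 2) (Fin 2) ℝ} {Q : (Fin 2 → ℝ) → ℝ}
    {C : ℝ} (hQ : ∀ v, Q (S *ᵥ v) = Q v) (hC : ∀ y : EuclideanSpace ℝ (Fin 2), ‖y‖ ^ 2 ≤ C * Q y)
    (x : EuclideanSpace ℝ (Fin 2)) : IsBounded (discOrbit S x) := by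
  have hQpow : ∀ n : ℕ, ∀ v, Q ((S ^ n) *ᵥ v) = Q v := by
    intro n
    induction n with
    | zero => simp
    | succ n ih => intro v; rw [pow_succ', ← mulVec_mulVec, hQ, ih]
  rw [isBounded_iff_forall_norm_le]
  refine ⟨Real.sqrt (C * Q x), ?_⟩
  rintro y ⟨n, hy⟩
  apply Real.le_sqrt_of_sq_le
  calc ‖y‖ ^ 2 ≤ C * Q y := hC y
    _ = C * Q x := by rw [hy, hQpow]

theorem stmt_15 (c τ : ℝ) (hc : c < 0) (hτ0 : 0 < τ) (hτ : τ < 2 / Real.sqrt (-c)) :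
    (!![1 + τ ^ 2 * c / 2, τ * c * (1 + τ ^ 2 * c / 4); τ, 1 + τ ^ 2 * c / 2] :
        Matrix (Fin 2) (Fin 2) ℝ).det = 1 ∧
    |(!![1 + τ ^ 2 * c / 2, τ * c * (1 + τ ^ 2 * c / 4); τ, 1 + τ ^ 2 * c / 2] :
        Matrix (Fin 2) (Fin 2) ℝ).trace| = |2 + τ ^ 2 * c| ∧
    |2 + τ ^ 2 * c| < 2 ∧
    ∀ x : EuclideanSpace ℝ (Fin 2),
      IsBounded (discOrbit
        !![1 + τ ^ 2 * c / 2, τ * c * (1 + τ ^ 2 * c / 4); τ, 1 + τ ^ 2 * c / 2] x) := by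
  have hsq := sq_mul_neg_lt_four hc hτ0 hτ
  have hb : 0 < -(τ * c * (1 + τ ^ 2 * c / 4)) :=
    neg_pos.mpr (mul_neg_of_neg_of_pos (mul_neg_of_pos_of_neg hτ0 hc) (by linarith))
  refine ⟨det_stormerVerletMatrix c τ, congrArg abs (trace_stormerVerletMatrix c τ), ?_, ?_⟩
  · have : 0 < τ ^ 2 * -c := mul_pos (pow_pos hτ0 2) (neg_pos.mpr hc)
    exact abs_lt.mpr ⟨by linarith, by linarith⟩
  · set b := τ * c * (1 + τ ^ 2 * c / 4)
    exact isBounded_discOrbit_of_invariant (Q := fun v => τ * v 0 ^ 2 - b * v 1 ^ 2)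
      (C := τ⁻¹ + (-b)⁻¹) (quadForm_mulVec_of_det_eq_one (det_stormerVerletMatrix c τ))
      fun y => (norm_sq_le_inv_add_inv_mul hτ0 hb y).trans_eq (by ring)
end

section
/- Let A be a 2×2 real matrix with trace A = 0 and det A > 0, and let τ > 0. Then I − (τ/2)A is invertible, and the matrix S(τ) = (I − (τ/2)A)⁻¹ (I + (τ/2)A) given by the implicit midpoint rule satisfies det S(τ) = 1 and |trace S(τ)| < 2; consequently, for every x ∈ ℝ² the set {S(τ)ⁿ·x : n ∈ ℕ} is bounded. -/
/-!
By Cayley–Hamilton a trace-zero `2 × 2` matrix satisfies `A² = -det A • 1`, so with `c = τ / 2`,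
`(1 - cA)(1 + cA) = (1 + c² det A) • 1` and the midpoint map is explicit:
`S = ((1 - c² det A) • 1 + 2c • A) / (1 + c² det A)`, whose determinant is `1` and whose trace is
`2 (1 - c² det A) / (1 + c² det A) ∈ (-2, 2)`.

Any real `2 × 2` matrix `S` with `det S = 1` and `|tr S| < 2` has bounded orbits: by
Cayley–Hamilton again `Sⁿ = a • 1 + b • S`, and `det Sⁿ = 1` reads `a² + ab tr S + b² = 1`.
Since `|tr S| < 2` this quadratic form is positive definite, so the coefficients `a, b` stay
bounded.
-/

open Matrix Bornology

namespace Matrix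

section CommRing

variable {R : Type*} [CommRing R]

theorem mul_self_fin_two (A : Matrix (Fin 2) (Fin 2) R) :
    A * A = A.trace • A - A.det • 1 := by
  ext i j
  fin_cases i <;> fin_cases j <;>
    simp only [Fin.zero_eta, Fin.mk_one, Fin.isValue, mul_apply, Fin.sum_univ_two, trace_fin_two,
      det_fin_two, Matrix.sub_apply, Matrix.smul_apply, smul_eq_mul, one_apply_eq, one_apply_ne,
      ne_eq, zero_ne_one, one_ne_zero, not_false_eq_true, mul_one, mul_zero, sub_zero] <;> ring

theorem mul_self_eq_neg_det_smul_one_of_trace_eq_zero {A : Matrix (Fin 2) (Fin 2) R}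
    (hA : A.trace = 0) : A * A = -A.det • 1 := by
  rw [mul_self_fin_two, hA, zero_smul, zero_sub, neg_smul]

theorem det_smul_one_add_smul_fin_two (a b : R) (A : Matrix (Fin 2) (Fin 2) R) :
    (a • 1 + b • A).det = a ^ 2 + a * b * A.trace + b ^ 2 * A.det := by
  simp only [det_fin_two, trace_fin_two, Matrix.add_apply, Matrix.smul_apply, smul_eq_mul,
    one_apply_eq, one_apply_ne, ne_eq, zero_ne_one, one_ne_zero, not_false_eq_true, mul_one,
    mul_zero, zero_add, Fin.isValue]
  ring

theorem exists_pow_eq_smul_one_add_smul_fin_two (A : Matrix (Fin 2) (Fin 2) R) (n : ℕ) :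
    ∃ a b : R, A ^ n = a • 1 + b • A := by
  induction n with
  | zero => exact ⟨1, 0, by simp⟩
  | succ n ih =>
    obtain ⟨a, b, hab⟩ := ih
    refine ⟨-(b * A.det), a + b * A.trace, ?_⟩
    rw [pow_succ, hab, add_mul, smul_mul_assoc, smul_mul_assoc, one_mul, mul_self_fin_two]
    module

theorem smul_mul_smul_eq_of_trace_eq_zero {A : Matrix (Fin 2) (Fin 2) R} (hA : A.trace = 0)
    (c : R) : c • A * c • A = -(c ^ 2 * A.det) • 1 := by
  rw [smul_mul_smul_comm, mul_self_eq_neg_det_smul_one_of_trace_eq_zero hA]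
  module

end CommRing

theorem one_sub_smul_mul_inv_smul_one_add_smul_of_trace_eq_zero {K : Type*} [Field K]
    {A : Matrix (Fin 2) (Fin 2) K} (hA : A.trace = 0) {c : K} (hd : 1 + c ^ 2 * A.det ≠ 0) :
    (1 - c • A) * ((1 + c ^ 2 * A.det)⁻¹ • (1 + c • A)) = 1 := by
  have hprod : (1 - c • A) * (1 + c • A) = (1 + c ^ 2 * A.det) • 1 := by
    rw [sub_mul, mul_add, mul_add, one_mul, mul_one, one_mul,
      smul_mul_smul_eq_of_trace_eq_zero hA]
    module
  rw [mul_smul_comm, hprod, smul_smul, inv_mul_cancel₀ hd, one_smul]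

end Matrix

theorem sq_add_sq_le_of_sq_add_mul_add_sq_eq_one {t a b : ℝ} (ht : |t| < 2)
    (h : a ^ 2 + a * b * t + b ^ 2 = 1) : a ^ 2 + b ^ 2 ≤ 2 / (2 - |t|) := by
  rw [le_div_iff₀ (by linarith)]
  rcases abs_cases t with ⟨habs, ht0⟩ | ⟨habs, ht0⟩ <;> rw [habs]
  · nlinarith [mul_nonneg ht0 (sq_nonneg (a + b))]
  · nlinarith [mul_nonneg (neg_nonneg.2 ht0.le) (sq_nonneg (a - b))]

theorem isBounded_discOrbit_of_det_eq_one_of_abs_trace_lt_two {S : Matrix (Fin 2) (Fin 2) ℝ}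
    (hdet : S.det = 1) (htr : |S.trace| < 2) (x : EuclideanSpace ℝ (Fin 2)) :
    IsBounded (discOrbit S x) := by
  set K := 2 / (2 - |S.trace|)
  set Sx : EuclideanSpace ℝ (Fin 2) := WithLp.toLp 2 (S *ᵥ x)
  refine isBounded_iff_forall_norm_le.2 ⟨√K * (‖x‖ + ‖Sx‖), ?_⟩
  rintro y ⟨n, hy⟩
  obtain ⟨a, b, hab⟩ := S.exists_pow_eq_smul_one_add_smul_fin_two n
  have hK : a ^ 2 + b ^ 2 ≤ K := by
    refine sq_add_sq_le_of_sq_add_mul_add_sq_eq_one htr ?_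
    have hdet_pow := congrArg det hab
    rwa [det_pow, det_smul_one_add_smul_fin_two, hdet, one_pow, mul_one, eq_comm] at hdet_pow
  have hy' : y = a • x + b • Sx := by
    apply WithLp.ofLp_injective 2
    rw [hy, hab]
    simp only [WithLp.ofLp_add, WithLp.ofLp_smul, add_mulVec, smul_mulVec, one_mulVec, Sx]
  calc ‖y‖ ≤ |a| * ‖x‖ + |b| * ‖Sx‖ := by
        rw [hy', ← Real.norm_eq_abs, ← Real.norm_eq_abs, ← norm_smul, ← norm_smul]
        exact norm_add_le _ _
    _ ≤ √K * ‖x‖ + √K * ‖Sx‖ := by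
        gcongr <;> exact Real.abs_le_sqrt (by nlinarith)
    _ = √K * (‖x‖ + ‖Sx‖) := by ring

theorem stmt_18 (A : Matrix (Fin 2) (Fin 2) ℝ) (hTr : A.trace = 0) (hDet : 0 < A.det)
    (τ : ℝ) (hτ : 0 < τ) :
    IsUnit (1 - (τ / 2) • A) ∧
    ((1 - (τ / 2) • A)⁻¹ * (1 + (τ / 2) • A)).det = 1 ∧
    |((1 - (τ / 2) • A)⁻¹ * (1 + (τ / 2) • A)).trace| < 2 ∧
    ∀ x : EuclideanSpace ℝ (Fin 2),
      IsBounded (discOrbit ((1 - (τ / 2) • A)⁻¹ * (1 + (τ / 2) • A)) x) := by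
  set c := τ / 2
  set d := 1 + c ^ 2 * A.det
  have hcA : 0 < c ^ 2 * A.det := by positivity
  have hd : 0 < d := by positivity
  have hright := one_sub_smul_mul_inv_smul_one_add_smul_of_trace_eq_zero hTr hd.ne'
  have hS : (1 - c • A)⁻¹ * (1 + c • A) = ((1 - c ^ 2 * A.det) / d) • 1 + (2 * c / d) • A := by
    rw [inv_eq_right_inv hright, smul_mul_assoc, add_mul, mul_add, mul_add, one_mul, mul_one,
      one_mul, smul_mul_smul_eq_of_trace_eq_zero hTr]
    module
  have hdetS : ((1 - c • A)⁻¹ * (1 + c • A)).det = 1 := by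
    rw [hS, det_smul_one_add_smul_fin_two, hTr]
    field_simp
    ring
  have htrS : |((1 - c • A)⁻¹ * (1 + c • A)).trace| < 2 := by
    have hratio : |(1 - c ^ 2 * A.det) / d| < 1 := by
      rw [abs_div, abs_of_pos hd, div_lt_one hd, abs_lt]
      constructor <;> linarith
    rw [hS, trace_add, trace_smul, trace_smul, trace_one, hTr, smul_zero, add_zero, smul_eq_mul,
      Fintype.card_fin, abs_mul, Nat.cast_ofNat, abs_two]
    linarith
  exact ⟨.of_mul_eq_one _ hright, hdetS, htrS,
    isBounded_discOrbit_of_det_eq_one_of_abs_trace_lt_two hdetS htrS⟩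
end
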